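/- For all 2π-periodic C² functions u, v : ℝ → ℝ one has ⟨Ã₂u, v⟩_{−1,w} = −(1/2)·∫₀^{2π} u₀(θ)·v₀(θ)/w(θ) dθ. In particular Ã₂ is symmetric and negative semi-definite with respect to ⟨·,·⟩_{−1,w}. -/

import Mathlib

noncomputable section

open MeasureTheory

/-- `Ψ₀(x)`: the non-disordered fixed-point function. -/
def Psi0 (x : ℝ) : ℝ :=
  (∫ θ in (0:ℝ)..(2 * Real.pi), Real.cos θ * Real.exp (x * Real.cos θ)) /
    (∫ θ in (0:ℝ)..(2 * Real.pi), Real.exp (x * Real.cos θ))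

/-- The potential `Φ(θ) = −2Kr₀·cos θ`. -/
def Phi (K r₀ θ : ℝ) : ℝ := -2 * K * r₀ * Real.cos θ

/-- The weight `w(θ) = exp(−Φ(θ))/∫₀^{2π} exp(−Φ)`. -/
def w (K r₀ θ : ℝ) : ℝ :=
  Real.exp (-Phi K r₀ θ) / (∫ u in (0:ℝ)..(2 * Real.pi), Real.exp (-Phi K r₀ u))

/-- The Fokker–Planck operator `Ã₂v = (1/2)v'' + (Kr₀ sin(θ) v)'`. -/
def A2 (K r₀ : ℝ) (v : ℝ → ℝ) (θ : ℝ) : ℝ :=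
  (1 / 2) * deriv (deriv v) θ + deriv (fun u => K * r₀ * Real.sin u * v u) θ

/-- The `2π`-periodic primitive of a zero-mean `a`, normalized so that
`∫₀^{2π} 𝒜/k = 0` for the weight `k`. -/
def prim (k a : ℝ → ℝ) (θ : ℝ) : ℝ :=
  (∫ u in (0:ℝ)..θ, a u) -
    (∫ s in (0:ℝ)..(2 * Real.pi), (∫ u in (0:ℝ)..s, a u) / k s) /
      (∫ s in (0:ℝ)..(2 * Real.pi), 1 / k s)

/-- `v₀ = v − (∫₀^{2π} v)·w`, the zero-mean part of `v`. -/
def vz (K r₀ : ℝ) (v : ℝ → ℝ) (θ : ℝ) : ℝ :=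
  v θ - (∫ u in (0:ℝ)..(2 * Real.pi), v u) * w K r₀ θ

/-- The weighted Sobolev inner product `⟨u, v⟩_{−1,w}`. -/
def pairW (K r₀ : ℝ) (u v : ℝ → ℝ) : ℝ :=
  (∫ θ in (0:ℝ)..(2 * Real.pi), u θ) * (∫ θ in (0:ℝ)..(2 * Real.pi), v θ) +
    ∫ θ in (0:ℝ)..(2 * Real.pi),
      prim (w K r₀) (vz K r₀ u) θ * prim (w K r₀) (vz K r₀ v) θ / w K r₀ θ

/-!
The operator is a derivative, `Ã₂u = J'` with the flux `J = (1/2)u' + Kr₀ sin·u`, and since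
`w' = −2Kr₀ sin·w` one also has `J = (1/2) w (u/w)'`. Hence `∫ Ã₂u = 0`, `(Ã₂u)₀ = Ã₂u`, and its
normalized primitive is `J` itself because `∫ J/w = (1/2)∫ (u/w)' = 0` by periodicity. The pairing
becomes `∫ J 𝒱₀/w = (1/2)∫ (u/w)' 𝒱₀`, and one integration by parts (with `𝒱₀' = v₀` and
`u/w − ∫u = u₀/w`) gives `−(1/2)∫ u₀v₀/w`. Symmetry and the sign follow from this formula.
-/

theorem Function.Periodic.deriv {𝕜 F : Type*} [NontriviallyNormedField 𝕜] [NormedAddCommGroup F]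
    [NormedSpace 𝕜 F] {f : 𝕜 → F} {c : 𝕜} (hf : Function.Periodic f c) :
    Function.Periodic (deriv f) c := fun x => by
  rw [← deriv_comp_add_const, funext hf]

section Primitive

variable {k a : ℝ → ℝ}

theorem hasDerivAt_prim (ha : Continuous a) (θ : ℝ) : HasDerivAt (prim k a) (a θ) θ :=
  (ha.integral_hasStrictDerivAt 0 θ).hasDerivAt.sub_const _

theorem prim_two_pi (ha : ∫ θ in (0:ℝ)..(2 * Real.pi), a θ = 0) :
    prim k a (2 * Real.pi) = prim k a 0 := by
  simp only [prim, ha, intervalIntegral.integral_same]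

theorem prim_eq_of_hasDerivAt {f : ℝ → ℝ} (hf : ∀ x, HasDerivAt f (a x) x) (ha : Continuous a)
    (hk : Continuous k) (hk_pos : ∀ x, 0 < k x) (θ : ℝ) :
    prim k a θ = f θ - (∫ s in (0:ℝ)..(2 * Real.pi), f s / k s) /
      ∫ s in (0:ℝ)..(2 * Real.pi), 1 / k s := by
  have hf_cont : Continuous f := continuous_iff_continuousAt.2 fun x => (hf x).continuousAt
  have hk_ne : ∀ x, k x ≠ 0 := fun x => (hk_pos x).ne'
  have hftc : ∀ s, ∫ u in (0:ℝ)..s, a u = f s - f 0 := fun s =>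
    intervalIntegral.integral_eq_sub_of_hasDerivAt (fun x _ => hf x) (ha.intervalIntegrable _ _)
  have hinv_pos : 0 < ∫ s in (0:ℝ)..(2 * Real.pi), 1 / k s :=
    intervalIntegral.intervalIntegral_pos_of_pos
      ((continuous_const.div hk hk_ne).intervalIntegrable _ _)
      (fun x => one_div_pos.2 (hk_pos x)) Real.two_pi_pos
  have hsplit : ∫ s in (0:ℝ)..(2 * Real.pi), (f s - f 0) / k s =
      (∫ s in (0:ℝ)..(2 * Real.pi), f s / k s) - f 0 * ∫ s in (0:ℝ)..(2 * Real.pi), 1 / k s := by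
    simp_rw [sub_div, ← intervalIntegral.integral_const_mul, mul_one_div]
    exact intervalIntegral.integral_sub ((hf_cont.div hk hk_ne).intervalIntegrable _ _)
      ((continuous_const.div hk hk_ne).intervalIntegrable _ _)
  simp only [prim, hftc, hsplit]
  field_simp
  ring

end Primitive

section Weight

variable (K r₀ : ℝ)

theorem continuous_exp_neg_Phi : Continuous fun s => Real.exp (-Phi K r₀ s) := by
  unfold Phi; fun_prop

theorem integral_exp_neg_Phi_pos : 0 < ∫ s in (0:ℝ)..(2 * Real.pi), Real.exp (-Phi K r₀ s) :=
  intervalIntegral.intervalIntegral_pos_of_pos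
    ((continuous_exp_neg_Phi K r₀).intervalIntegrable _ _) (fun _ => Real.exp_pos _)
    Real.two_pi_pos

theorem w_pos (θ : ℝ) : 0 < w K r₀ θ :=
  div_pos (Real.exp_pos _) (integral_exp_neg_Phi_pos K r₀)

theorem continuous_w : Continuous (w K r₀) :=
  (continuous_exp_neg_Phi K r₀).div_const _

theorem Continuous.div_w {f : ℝ → ℝ} (hf : Continuous f) : Continuous fun θ => f θ / w K r₀ θ :=
  hf.div (continuous_w K r₀) fun θ => (w_pos K r₀ θ).ne'

theorem w_periodic : Function.Periodic (w K r₀) (2 * Real.pi) := fun θ => by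
  simp only [w, Phi, Real.cos_add_two_pi]

theorem hasDerivAt_w (θ : ℝ) :
    HasDerivAt (w K r₀) (-(2 * K * r₀ * Real.sin θ) * w K r₀ θ) θ := by
  have hPhi : HasDerivAt (fun θ => -Phi K r₀ θ) (2 * K * r₀ * -Real.sin θ) θ := by
    simpa [Phi, mul_comm, mul_assoc] using (Real.hasDerivAt_cos θ).const_mul (2 * K * r₀)
  refine (hPhi.exp.div_const _).congr_deriv ?_
  unfold w; ring

theorem integral_w : ∫ θ in (0:ℝ)..(2 * Real.pi), w K r₀ θ = 1 := by
  unfold w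
  rw [intervalIntegral.integral_div, div_self (integral_exp_neg_Phi_pos K r₀).ne']

end Weight

def flux (K r₀ : ℝ) (u : ℝ → ℝ) (θ : ℝ) : ℝ :=
  (1 / 2) * deriv u θ + K * r₀ * Real.sin θ * u θ

section Flux

variable (K r₀ : ℝ) {u : ℝ → ℝ}

theorem hasDerivAt_sin_mul (hu : Differentiable ℝ u) (θ : ℝ) :
    HasDerivAt (fun s => K * r₀ * Real.sin s * u s)
      (K * r₀ * Real.cos θ * u θ + K * r₀ * Real.sin θ * deriv u θ) θ :=
  ((Real.hasDerivAt_sin θ).const_mul (K * r₀)).mul (hu θ).hasDerivAt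

theorem A2_eq (hu : Differentiable ℝ u) (θ : ℝ) :
    A2 K r₀ u θ = (1 / 2) * deriv (deriv u) θ +
      (K * r₀ * Real.cos θ * u θ + K * r₀ * Real.sin θ * deriv u θ) := by
  rw [A2, (hasDerivAt_sin_mul K r₀ hu θ).deriv]

theorem hasDerivAt_flux (hu : ContDiff ℝ 2 u) (θ : ℝ) :
    HasDerivAt (flux K r₀ u) (A2 K r₀ u θ) θ := by
  rw [A2_eq K r₀ (hu.differentiable two_ne_zero)]
  exact ((hu.deriv'.differentiable one_ne_zero θ).hasDerivAt.const_mul _).add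
    (hasDerivAt_sin_mul K r₀ (hu.differentiable two_ne_zero) θ)

theorem continuous_A2 (hu : ContDiff ℝ 2 u) : Continuous (A2 K r₀ u) := by
  have hu₀ : Continuous u := hu.continuous
  have hu₁ : Continuous (deriv u) := hu.continuous_deriv one_le_two
  have hu₂ : Continuous (deriv (deriv u)) := hu.deriv'.continuous_deriv le_rfl
  simp only [funext (A2_eq K r₀ (hu.differentiable two_ne_zero))]
  fun_prop

theorem continuous_flux (hu : ContDiff ℝ 2 u) : Continuous (flux K r₀ u) :=
  continuous_iff_continuousAt.2 fun θ => (hasDerivAt_flux K r₀ hu θ).continuousAt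

theorem flux_periodic (huper : Function.Periodic u (2 * Real.pi)) :
    Function.Periodic (flux K r₀ u) (2 * Real.pi) := fun θ => by
  simp only [flux, huper.deriv θ, Real.sin_add_two_pi, huper θ]

theorem integral_A2 (hu : ContDiff ℝ 2 u) (huper : Function.Periodic u (2 * Real.pi)) :
    ∫ θ in (0:ℝ)..(2 * Real.pi), A2 K r₀ u θ = 0 := by
  rw [intervalIntegral.integral_eq_sub_of_hasDerivAt (fun θ _ => hasDerivAt_flux K r₀ hu θ)
    ((continuous_A2 K r₀ hu).intervalIntegrable _ _), sub_eq_zero]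
  simpa using flux_periodic K r₀ huper 0

theorem hasDerivAt_div_w (hu : Differentiable ℝ u) (θ : ℝ) :
    HasDerivAt (fun s => u s / w K r₀ s) (2 * flux K r₀ u θ / w K r₀ θ) θ := by
  refine ((hu θ).hasDerivAt.div (hasDerivAt_w K r₀ θ) (w_pos K r₀ θ).ne').congr_deriv ?_
  have hw := (w_pos K r₀ θ).ne'
  field_simp
  unfold flux
  ring

theorem integral_flux_div_w (hu : ContDiff ℝ 2 u) (huper : Function.Periodic u (2 * Real.pi)) :
    ∫ θ in (0:ℝ)..(2 * Real.pi), flux K r₀ u θ / w K r₀ θ = 0 := by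
  have hftc := intervalIntegral.integral_eq_sub_of_hasDerivAt (a := 0) (b := 2 * Real.pi)
    (fun θ _ => hasDerivAt_div_w K r₀ (hu.differentiable two_ne_zero) θ)
    (((continuous_const.mul (continuous_flux K r₀ hu)).div_w K r₀).intervalIntegrable _ _)
  have hper : u (2 * Real.pi) / w K r₀ (2 * Real.pi) = u 0 / w K r₀ 0 := by
    simpa using huper.div (w_periodic K r₀) 0
  simp_rw [mul_div_assoc, intervalIntegral.integral_const_mul, hper, sub_self] at hftc
  simpa using hftc

theorem vz_A2 (hu : ContDiff ℝ 2 u) (huper : Function.Periodic u (2 * Real.pi)) :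
    vz K r₀ (fun θ => A2 K r₀ u θ) = A2 K r₀ u := by
  funext θ
  simp only [vz, integral_A2 K r₀ hu huper, zero_mul, sub_zero]

theorem prim_vz_A2 (hu : ContDiff ℝ 2 u) (huper : Function.Periodic u (2 * Real.pi)) :
    prim (w K r₀) (vz K r₀ (fun θ => A2 K r₀ u θ)) = flux K r₀ u := by
  funext θ
  rw [vz_A2 K r₀ hu huper, prim_eq_of_hasDerivAt (hasDerivAt_flux K r₀ hu) (continuous_A2 K r₀ hu)
    (continuous_w K r₀) (w_pos K r₀), integral_flux_div_w K r₀ hu huper, zero_div, sub_zero]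

end Flux

section Pairing

variable (K r₀ : ℝ) {u v : ℝ → ℝ}

theorem integral_vz (hv : Continuous v) : ∫ θ in (0:ℝ)..(2 * Real.pi), vz K r₀ v θ = 0 := by
  unfold vz
  rw [intervalIntegral.integral_sub (hv.intervalIntegrable _ _)
      (((continuous_w K r₀).const_mul _).intervalIntegrable _ _),
    intervalIntegral.integral_const_mul, integral_w, mul_one, sub_self]

theorem vz_div_w (θ : ℝ) :
    vz K r₀ u θ / w K r₀ θ = u θ / w K r₀ θ - ∫ s in (0:ℝ)..(2 * Real.pi), u s := by
  rw [vz, sub_div, mul_div_assoc, div_self (w_pos K r₀ θ).ne', mul_one]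

theorem pairW_A2 (hu : ContDiff ℝ 2 u) (huper : Function.Periodic u (2 * Real.pi))
    (hv : Continuous v) :
    pairW K r₀ (fun θ => A2 K r₀ u θ) v =
      -(1 / 2) * ∫ θ in (0:ℝ)..(2 * Real.pi), vz K r₀ u θ * vz K r₀ v θ / w K r₀ θ := by
  have hvz : Continuous (vz K r₀ v) := hv.sub (continuous_const.mul (continuous_w K r₀))
  set V := prim (w K r₀) (vz K r₀ v)
  have hf : ∀ θ, HasDerivAt (fun s => vz K r₀ u s / w K r₀ s)
      (2 * flux K r₀ u θ / w K r₀ θ) θ := fun θ => by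
    simp_rw [vz_div_w]
    exact (hasDerivAt_div_w K r₀ (hu.differentiable two_ne_zero) θ).sub_const _
  have hf_per : vz K r₀ u (2 * Real.pi) / w K r₀ (2 * Real.pi) = vz K r₀ u 0 / w K r₀ 0 := by
    simp_rw [vz_div_w]
    simpa using huper.div (w_periodic K r₀) 0
  have hibp := intervalIntegral.integral_mul_deriv_eq_deriv_mul (a := 0) (b := 2 * Real.pi)
    (fun θ _ => (hasDerivAt_prim hvz θ : HasDerivAt V _ θ)) (fun θ _ => hf θ)
    (hvz.intervalIntegrable _ _)
    (((continuous_const.mul (continuous_flux K r₀ hu)).div_w K r₀).intervalIntegrable _ _)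
  rw [prim_two_pi (integral_vz K r₀ hv), hf_per, sub_self, zero_sub] at hibp
  unfold pairW
  rw [integral_A2 K r₀ hu huper, zero_mul, zero_add, prim_vz_A2 K r₀ hu huper]
  calc ∫ θ in (0:ℝ)..(2 * Real.pi), flux K r₀ u θ * V θ / w K r₀ θ
      = (1 / 2) * ∫ θ in (0:ℝ)..(2 * Real.pi), V θ * (2 * flux K r₀ u θ / w K r₀ θ) := by
        rw [← intervalIntegral.integral_const_mul]
        congr 1; funext θ; ring
    _ = -(1 / 2) * ∫ θ in (0:ℝ)..(2 * Real.pi), vz K r₀ v θ * (vz K r₀ u θ / w K r₀ θ) := by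
        rw [hibp]; ring
    _ = _ := by
        congr 1; congr 1; funext θ; ring

theorem pairW_comm (u v : ℝ → ℝ) : pairW K r₀ u v = pairW K r₀ v u := by
  unfold pairW
  congr 1
  · ring
  · congr 1; funext θ; ring

end Pairing

theorem stmt11_general (K r₀ : ℝ)
    (u v : ℝ → ℝ) (hu : ContDiff ℝ 2 u) (hv : ContDiff ℝ 2 v)
    (huper : Function.Periodic u (2 * Real.pi))
    (hvper : Function.Periodic v (2 * Real.pi)) :
    pairW K r₀ (fun θ => A2 K r₀ u θ) v =
        -(1 / 2) * ∫ θ in (0:ℝ)..(2 * Real.pi), vz K r₀ u θ * vz K r₀ v θ / w K r₀ θ ∧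
      pairW K r₀ (fun θ => A2 K r₀ u θ) v = pairW K r₀ u (fun θ => A2 K r₀ v θ) ∧
      pairW K r₀ (fun θ => A2 K r₀ v θ) v ≤ 0 := by
  have huv := pairW_A2 K r₀ hu huper hv.continuous
  refine ⟨huv, ?_, ?_⟩
  · rw [huv, pairW_comm K r₀ u, pairW_A2 K r₀ hv hvper hu.continuous]
    simp_rw [mul_comm (vz K r₀ u _)]
  · rw [pairW_A2 K r₀ hv hvper hv.continuous]
    have hsq : 0 ≤ ∫ θ in (0:ℝ)..(2 * Real.pi), vz K r₀ v θ * vz K r₀ v θ / w K r₀ θ :=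
      intervalIntegral.integral_nonneg Real.two_pi_pos.le fun θ _ =>
        div_nonneg (mul_self_nonneg _) (w_pos K r₀ θ).le
    linarith

/-- Integration-by-parts identity for the Fokker–Planck operator in the weighted Sobolev
inner product; in particular the operator is symmetric and negative semi-definite. -/
theorem stmt11 (K r₀ : ℝ) (hK : 1 < K) (hr₀ : 0 < r₀) (hfix : r₀ = Psi0 (2 * K * r₀))
    (u v : ℝ → ℝ) (hu : ContDiff ℝ 2 u) (hv : ContDiff ℝ 2 v)
    (huper : Function.Periodic u (2 * Real.pi))
    (hvper : Function.Periodic v (2 * Real.pi)) :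
    pairW K r₀ (fun θ => A2 K r₀ u θ) v =
        -(1 / 2) * ∫ θ in (0:ℝ)..(2 * Real.pi), vz K r₀ u θ * vz K r₀ v θ / w K r₀ θ ∧
      pairW K r₀ (fun θ => A2 K r₀ u θ) v = pairW K r₀ u (fun θ => A2 K r₀ v θ) ∧
      pairW K r₀ (fun θ => A2 K r₀ v θ) v ≤ 0 :=
  stmt11_general K r₀ u v hu hv huper hvper

end
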